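/- arXiv:2305.16190 — 4 statements merged into one kernel-verified Lean document; each statement's English description precedes it below -/
import Mathlib

section
/- Let G(z) = Σ_{n=1}^{N} c_n·( 1/(E_n - z) - 1/(-E_n - z) ) with c_n > 0 and E_n > 0. Then for every z in the open upper half-plane, G(z) does not lie in (-∞, 0]; i.e., G maps ℂ⁺ into ℂ \ ℝ≤0. -/
open Complex

lemma green_term_eq (e : ℝ) (he : 0 < e) (z : ℂ) (hz : 0 < z.im) :
    (1 / ((e : ℂ) - z) - 1 / ((-e : ℂ) - z)) = (2 * e : ℂ) / ((e : ℂ)^2 - z^2) := by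
  have h1 : (e : ℂ) - z ≠ 0 := by
    intro h
    have := congrArg Complex.im h
    simp at this
    linarith
  have h2 : (-e : ℂ) - z ≠ 0 := by
    intro h
    have := congrArg Complex.im h
    simp at this
    linarith
  have h3 : (e : ℂ)^2 - z^2 ≠ 0 := by
    intro h
    have : ((e:ℂ) - z) * (-(e:ℂ) - z) = -((e:ℂ)^2 - z^2) := by ring
    have hzero : ((e:ℂ) - z) * (-(e:ℂ) - z) = 0 := by rw [this, h, neg_zero]
    rcases mul_eq_zero.mp hzero with h' | h'
    · exact h1 h'
    · apply h2; rw [← h']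
  field_simp
  ring

lemma green_key (a e : ℝ) (ha : 0 < a) (he : 0 < e) (z : ℂ) (hz : 0 < z.im) :
    ((0 < z.re → 0 < ((a:ℂ) * (1 / ((e : ℂ) - z) - 1 / ((-e : ℂ) - z))).im) ∧
     (z.re < 0 → ((a:ℂ) * (1 / ((e : ℂ) - z) - 1 / ((-e : ℂ) - z))).im < 0) ∧
     (z.re = 0 → ((a:ℂ) * (1 / ((e : ℂ) - z) - 1 / ((-e : ℂ) - z))).im = 0 ∧
        0 < ((a:ℂ) * (1 / ((e : ℂ) - z) - 1 / ((-e : ℂ) - z))).re)) := by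
  rw [green_term_eq e he z hz]
  set w : ℂ := (e : ℂ)^2 - z^2 with hw
  have h3 : w ≠ 0 := by
    intro h
    have h1 : (e : ℂ) - z ≠ 0 := by
      intro h
      have := congrArg Complex.im h
      simp at this; linarith
    have h2 : (-e : ℂ) - z ≠ 0 := by
      intro h
      have := congrArg Complex.im h
      simp at this; linarith
    have hzero : ((e:ℂ) - z) * (-(e:ℂ) - z) = 0 := by
      have : ((e:ℂ) - z) * (-(e:ℂ) - z) = -w := by rw [hw]; ring
      rw [this, h, neg_zero]
    rcases mul_eq_zero.mp hzero with h' | h'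
    · exact h1 h'
    · apply h2; rw [← h']
  have hns : 0 < Complex.normSq w := Complex.normSq_pos.mpr h3
  have hwre : w.re = e^2 - z.re^2 + z.im^2 := by
    simp [hw, Complex.sub_re, Complex.sq_norm, pow_two, Complex.mul_re]
    ring
  have hwim : w.im = -(2 * z.re * z.im) := by
    simp [hw, Complex.sub_im, pow_two, Complex.mul_im]
    ring
  have him : ((a:ℂ) * ((2 * e : ℂ) / w)).im = (2 * a * e) * (2 * z.re * z.im) / Complex.normSq w := by
    rw [show (a:ℂ) * ((2 * e : ℂ) / w) = ((2*a*e : ℝ):ℂ) / w by push_cast; ring]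
    rw [Complex.div_im]
    simp [hwim]
    ring
  have hre : ((a:ℂ) * ((2 * e : ℂ) / w)).re = (2 * a * e) * w.re / Complex.normSq w := by
    rw [show (a:ℂ) * ((2 * e : ℂ) / w) = ((2*a*e : ℝ):ℂ) / w by push_cast; ring]
    rw [Complex.div_re]
    simp
  refine ⟨?_, ?_, ?_⟩
  · intro hx; rw [him]
    exact div_pos (by positivity) hns
  · intro hx; rw [him]
    apply div_neg_of_neg_of_pos _ hns
    nlinarith [mul_pos ha he, mul_pos (neg_pos.mpr hx) hz]
  · intro hx
    constructor
    · rw [him, hx]; simp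
    · rw [hre, hwre, hx]
      have h4 : (0:ℝ) < e^2 - 0^2 + z.im^2 := by nlinarith [pow_pos he 2, sq_nonneg z.im]
      exact div_pos (by nlinarith [mul_pos (mul_pos ha he) h4]) hns

theorem bosonic_green_function_avoids_negative_reals (N : ℕ) (hN : 0 < N)
    (c E : Fin N → ℝ) (hc : ∀ n, 0 < c n) (hE : ∀ n, 0 < E n)
    (z : ℂ) (hz : 0 < z.im) :
    (∑ n, (c n : ℂ) * (1 / ((E n : ℂ) - z) - 1 / ((-E n : ℂ) - z)))
      ∉ {x : ℂ | x.im = 0 ∧ x.re ≤ 0} := by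
  intro h
  obtain ⟨him0, hre0⟩ := h
  have hne : (Finset.univ : Finset (Fin N)).Nonempty := by
    simpa [Finset.univ_nonempty_iff] using Fin.pos_iff_nonempty.mp hN
  have hsim : (∑ n, (c n : ℂ) * (1 / ((E n : ℂ) - z) - 1 / ((-E n : ℂ) - z))).im
      = ∑ n, ((c n : ℂ) * (1 / ((E n : ℂ) - z) - 1 / ((-E n : ℂ) - z))).im :=
    Complex.im_sum _ _
  have hsre : (∑ n, (c n : ℂ) * (1 / ((E n : ℂ) - z) - 1 / ((-E n : ℂ) - z))).re
      = ∑ n, ((c n : ℂ) * (1 / ((E n : ℂ) - z) - 1 / ((-E n : ℂ) - z))).re :=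
    Complex.re_sum _ _
  rcases lt_trichotomy z.re 0 with hx | hx | hx
  · have : (∑ n, (c n : ℂ) * (1 / ((E n : ℂ) - z) - 1 / ((-E n : ℂ) - z))).im < 0 := by
      rw [hsim]
      exact Finset.sum_neg (fun n _ => ((green_key (c n) (E n) (hc n) (hE n) z hz).2.1 hx)) hne
    linarith [this, him0.ge]
  · have : 0 < (∑ n, (c n : ℂ) * (1 / ((E n : ℂ) - z) - 1 / ((-E n : ℂ) - z))).re := by
      rw [hsre]
      exact Finset.sum_pos (fun n _ => ((green_key (c n) (E n) (hc n) (hE n) z hz).2.2 hx).2) hne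
    linarith
  · have : 0 < (∑ n, (c n : ℂ) * (1 / ((E n : ℂ) - z) - 1 / ((-E n : ℂ) - z))).im := by
      rw [hsim]
      exact Finset.sum_pos (fun n _ => ((green_key (c n) (E n) (hc n) (hE n) z hz).1 hx)) hne
    linarith [this, him0.le]
end

section
/- Let G(z) = Σ_n c_n·(1/(E_n - z) - 1/(-E_n - z)) with c_n > 0, E_n > 0. Then Im G(z) > 0 when Re z > 0 and Im z > 0, Im G(z) < 0 when Re z < 0 and Im z > 0, and G(iy) is real and strictly positive for y > 0. -/
open Complex

lemma sub_ne (E : ℝ) (z : ℂ) (him : z.im ≠ 0) : (E:ℂ) - z ≠ 0 := by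
  intro h
  have : ((E:ℂ) - z).im = 0 := by rw [h]; simp
  simp at this
  exact him this

lemma term_eq (E : ℝ) (z : ℂ) (h1 : (E:ℂ) - z ≠ 0) (h2 : (-E:ℂ) - z ≠ 0) :
    1 / ((E:ℂ) - z) - 1 / ((-E:ℂ) - z) = 2 * E / ((E:ℂ)^2 - z^2) := by
  have h3 : (E:ℂ)^2 - z^2 ≠ 0 := by
    have : (E:ℂ)^2 - z^2 = ((E:ℂ) - z) * -((-E:ℂ) - z) := by push_cast; ring
    rw [this]
    exact mul_ne_zero h1 (neg_ne_zero.mpr h2)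
  field_simp
  ring

lemma term_im (c E : ℝ) (z : ℂ) (h1 : (E:ℂ) - z ≠ 0) (h2 : (-E:ℂ) - z ≠ 0) :
    ((c:ℂ) * (1 / ((E:ℂ) - z) - 1 / ((-E:ℂ) - z))).im
      = c * (4 * E * z.re * z.im) / Complex.normSq ((E:ℂ)^2 - z^2) := by
  rw [term_eq E z h1 h2]
  simp [Complex.div_im, Complex.mul_im, Complex.mul_re, Complex.normSq_apply, pow_two]
  ring

lemma axis_term (c E y : ℝ) (hE : 0 < E) (hy : 0 < y) :
    (c:ℂ) * (1 / ((E:ℂ) - y*Complex.I) - 1 / ((-E:ℂ) - y*Complex.I))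
      = ((2*c*E/(E^2+y^2) : ℝ) : ℂ) := by
  have him : ((y:ℂ)*Complex.I).im ≠ 0 := by simp [hy.ne']
  have h1 : (E:ℂ) - y*Complex.I ≠ 0 := sub_ne E _ him
  have h2 : (-E:ℂ) - y*Complex.I ≠ 0 := by
    have := sub_ne (-E) ((y:ℂ)*Complex.I) him
    simpa using this
  have hd : ((E:ℂ)^2 + (y:ℂ)^2) ≠ 0 := by
    have : (0:ℝ) < E^2 + y^2 := by positivity
    intro h
    have := congrArg Complex.re h
    simp [pow_two, Complex.mul_re] at this
    nlinarith [sq_nonneg E, sq_nonneg y]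
  rw [term_eq E _ h1 h2]
  have : ((E:ℂ)^2 - ((y:ℂ)*Complex.I)^2) = ((E:ℂ)^2 + (y:ℂ)^2) := by
    rw [mul_pow, Complex.I_sq]; ring
  rw [this]
  push_cast
  field_simp

lemma nsq_pos (E : ℝ) (z : ℂ) (h1 : (E:ℂ) - z ≠ 0) (h2 : (-E:ℂ) - z ≠ 0) :
    0 < Complex.normSq ((E:ℂ)^2 - z^2) := by
  apply Complex.normSq_pos.mpr
  have : (E:ℂ)^2 - z^2 = ((E:ℂ) - z) * -((-E:ℂ) - z) := by push_cast; ring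
  rw [this]
  exact mul_ne_zero h1 (neg_ne_zero.mpr h2)

theorem bosonic_green_function_quadrant_signs (N : ℕ) (hN : 0 < N)
    (c E : Fin N → ℝ) (hc : ∀ n, 0 < c n) (hE : ∀ n, 0 < E n) :
    (∀ z : ℂ, 0 < z.re → 0 < z.im →
      0 < (∑ n, (c n : ℂ) * (1 / ((E n : ℂ) - z) - 1 / ((-E n : ℂ) - z))).im) ∧
    (∀ z : ℂ, z.re < 0 → 0 < z.im →
      (∑ n, (c n : ℂ) * (1 / ((E n : ℂ) - z) - 1 / ((-E n : ℂ) - z))).im < 0) ∧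
    (∀ y : ℝ, 0 < y →
      (∑ n, (c n : ℂ) * (1 / ((E n : ℂ) - y * Complex.I) - 1 / ((-E n : ℂ) - y * Complex.I))).im = 0 ∧
      0 < (∑ n, (c n : ℂ) * (1 / ((E n : ℂ) - y * Complex.I) - 1 / ((-E n : ℂ) - y * Complex.I))).re) := by
  have hne : (Finset.univ : Finset (Fin N)).Nonempty := ⟨⟨0, hN⟩, Finset.mem_univ _⟩
  refine ⟨?_, ?_, ?_⟩
  · intro z hre him
    rw [Complex.im_sum]
    apply Finset.sum_pos _ hne
    intro n _
    have h1 : ((E n : ℝ):ℂ) - z ≠ 0 := sub_ne _ z him.ne'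
    have h2 : ((-E n : ℝ):ℂ) - z ≠ 0 := sub_ne _ z him.ne'
    have h2' : (-(E n) : ℂ) - z ≠ 0 := by push_cast at h2; exact h2
    rw [term_im _ _ z h1 h2']
    refine div_pos ?_ (nsq_pos (E n) z h1 h2')
    nlinarith [mul_pos (mul_pos (mul_pos (hc n) (hE n)) hre) him]
  · intro z hre him
    rw [Complex.im_sum]
    apply Finset.sum_neg _ hne
    intro n _
    have h1 : ((E n : ℝ):ℂ) - z ≠ 0 := sub_ne _ z him.ne'
    have h2 : ((-E n : ℝ):ℂ) - z ≠ 0 := sub_ne _ z him.ne'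
    have h2' : (-(E n) : ℂ) - z ≠ 0 := by push_cast at h2; exact h2
    rw [term_im _ _ z h1 h2']
    apply div_neg_of_neg_of_pos
    · nlinarith [mul_pos (mul_pos (mul_pos (hc n) (hE n)) him) (neg_pos.mpr hre)]
    · exact nsq_pos (E n) z h1 h2'
  · intro y hy
    have key : ∀ n : Fin N, (c n : ℂ) * (1 / ((E n : ℂ) - y * Complex.I) - 1 / ((-E n : ℂ) - y * Complex.I))
        = ((2 * c n * E n / ((E n)^2 + y^2) : ℝ) : ℂ) := by
      intro n
      exact axis_term (c n) (E n) y (hE n) hy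
    have hsum : (∑ n, (c n : ℂ) * (1 / ((E n : ℂ) - y * Complex.I) - 1 / ((-E n : ℂ) - y * Complex.I)))
        = ((∑ n, 2 * c n * E n / ((E n)^2 + y^2) : ℝ) : ℂ) := by
      rw [Finset.sum_congr rfl (fun n _ => key n), Complex.ofReal_sum]
    rw [hsum]
    refine ⟨Complex.ofReal_im _, ?_⟩
    rw [Complex.ofReal_re]
    apply Finset.sum_pos _ hne
    intro n _
    have := hc n; have := hE n
    positivity
end

section
/- For m > 0, a > 0, ω ∈ ℝ, and β a positive integer multiple of a: the finite geometric sum Σ_{k=0}^{β/a - 1} e^{iωka}·(e^{-mka} + e^{-m(β - ka)}) equals (1 - e^{-βm})·sinh(ma)/(cosh(ma) - cos(ωa)), provided ω is a bosonic Matsubara frequency ω = 2πℓ/β with ℓ ∈ ℤ (so that e^{iωβ} = 1). -/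
theorem discrete_fourier_transform_single_state (m a β ω : ℝ)
    (hm : 0 < m) (ha : 0 < a) (M : ℕ) (hM : 0 < M) (hβ : β = M * a)
    (ℓ : ℤ) (hω : ω = 2 * Real.pi * ℓ / β) :
    ∑ k ∈ Finset.range M,
      Complex.exp (Complex.I * ω * (k * a)) *
        ((Real.exp (-m * (k * a)) : ℂ) + (Real.exp (-m * (β - k * a)) : ℂ))
      = (((1 - Real.exp (-β * m)) * Real.sinh (m * a) /
          (Real.cosh (m * a) - Real.cos (ω * a)) : ℝ) : ℂ) := by
  have hβpos : (0:ℝ) < β := by rw [hβ]; positivity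
  have hma : 0 < m * a := mul_pos hm ha
  set z : ℂ := Complex.exp ((Complex.I * ω - m) * a) with hz
  set w : ℂ := Complex.exp ((Complex.I * ω + m) * a) with hw
  set Q : ℂ := Complex.exp (-(β * m)) with hQ
  have hterm : ∀ k : ℕ,
      Complex.exp (Complex.I * ω * (k * a)) *
        ((Real.exp (-m * (k * a)) : ℂ) + (Real.exp (-m * (β - k * a)) : ℂ))
      = z ^ k + Q * w ^ k := by
    intro k
    rw [hz, hw, hQ, ← Complex.exp_nat_mul, ← Complex.exp_nat_mul]
    push_cast [Complex.ofReal_exp]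
    rw [mul_add, ← Complex.exp_add, ← Complex.exp_add, ← Complex.exp_add]
    ring_nf
  rw [Finset.sum_congr rfl (fun k _ => hterm k), Finset.sum_add_distrib,
    ← Finset.mul_sum]
  -- z, w are not 1
  have habs_z : ‖z‖ = Real.exp (-(m*a)) := by
    rw [hz, Complex.norm_exp]; congr 1; simp
  have habs_w : ‖w‖ = Real.exp (m*a) := by
    rw [hw, Complex.norm_exp]; congr 1; simp
  have hz1 : z ≠ 1 := by
    intro h
    rw [h, norm_one] at habs_z
    have h2 : Real.exp (-(m*a)) < 1 := Real.exp_lt_one_iff.mpr (by linarith)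
    linarith [habs_z]
  have hw1 : w ≠ 1 := by
    intro h
    rw [h, norm_one] at habs_w
    nlinarith [Real.add_one_le_exp (m*a)]
  -- values of z^M and w^M
  have hb : (β:ℂ) = (M:ℕ) * (a:ℂ) := by exact_mod_cast congrArg Complex.ofReal hβ
  have hωβ : (ω:ℂ) * β = 2 * (Real.pi:ℂ) * ℓ := by
    have : ω * β = 2 * Real.pi * ℓ := by rw [hω]; field_simp
    exact_mod_cast congrArg Complex.ofReal this
  have hzM : z ^ M = Q := by
    rw [hz, hQ, ← Complex.exp_nat_mul]
    have h1 : (M:ℂ) * ((Complex.I * ω - m) * a)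
        = (ℓ:ℂ) * (2 * Real.pi * Complex.I) + (-(β * m)) := by
      linear_combination Complex.I * hωβ + ((m:ℂ) - Complex.I * ω) * hb
    rw [h1, Complex.exp_add, Complex.exp_int_mul_two_pi_mul_I, one_mul]
  have hwM : w ^ M = Q⁻¹ := by
    rw [hw, hQ, ← Complex.exp_nat_mul, ← Complex.exp_neg]
    have h1 : (M:ℂ) * ((Complex.I * ω + m) * a)
        = (ℓ:ℂ) * (2 * Real.pi * Complex.I) + (β * m) := by
      linear_combination Complex.I * hωβ - ((m:ℂ) + Complex.I * ω) * hb
    rw [h1, Complex.exp_add, Complex.exp_int_mul_two_pi_mul_I, one_mul, neg_neg]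
  rw [geom_sum_eq hz1, geom_sum_eq hw1, hzM, hwM]
  -- atoms
  set E : ℂ := Complex.exp (Complex.I * (ω * a)) with hE
  set A : ℂ := Complex.exp ((m:ℂ) * a) with hA
  have hzEA : z = E * A⁻¹ := by
    rw [hz, hE, hA, ← Complex.exp_neg, ← Complex.exp_add]; ring_nf
  have hwEA : w = E * A := by
    rw [hw, hE, hA, ← Complex.exp_add]; ring_nf
  have hQ0 : Q ≠ 0 := Complex.exp_ne_zero _
  have hE0 : E ≠ 0 := Complex.exp_ne_zero _
  have hA0 : A ≠ 0 := Complex.exp_ne_zero _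
  have hzz : z - 1 ≠ 0 := sub_ne_zero.mpr hz1
  have hww : w - 1 ≠ 0 := sub_ne_zero.mpr hw1
  -- RHS denominator nonzero
  have hden : Real.cosh (m*a) - Real.cos (ω*a) ≠ 0 := by
    have h1 : 1 < Real.cosh (m*a) := by
      rw [Real.one_lt_cosh]; positivity
    nlinarith [Real.cos_le_one (ω*a), h1]
  -- coerce RHS
  have hQcoe : ((Real.exp (-β * m) : ℝ) : ℂ) = Q := by
    rw [hQ, Complex.ofReal_exp]; congr 1; push_cast; ring
  push_cast [Complex.ofReal_sinh, Complex.ofReal_cosh, Complex.ofReal_cos]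
  rw [show Complex.exp (-(β:ℂ) * m) = Q by rw [hQ]; congr 1; ring]
  have hsinh : Complex.sinh ((m:ℂ) * a) = (A - A⁻¹) / 2 := by
    rw [Complex.sinh, Complex.exp_neg, ← hA]
  have hcosh : Complex.cosh ((m:ℂ) * a) = (A + A⁻¹) / 2 := by
    rw [Complex.cosh, Complex.exp_neg, ← hA]
  have hcos : Complex.cos ((ω:ℂ) * a) = (E + E⁻¹) / 2 := by
    rw [Complex.cos,
      show ((ω:ℂ) * a) * Complex.I = Complex.I * ((ω:ℂ) * a) by ring,
      show (-((ω:ℂ) * a)) * Complex.I = -(Complex.I * ((ω:ℂ) * a)) by ring,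
      Complex.exp_neg, ← hE]
  rw [hsinh, hcosh, hcos, hzEA, hwEA]
  have hdenC : (A + A⁻¹) / 2 - (E + E⁻¹) / 2 ≠ 0 := by
    intro h
    apply hden
    have : ((Real.cosh (m*a) - Real.cos (ω*a) : ℝ) : ℂ) = 0 := by
      push_cast [Complex.ofReal_cosh, Complex.ofReal_cos]
      rw [hcosh, hcos, h]
    exact_mod_cast this
  rw [hzEA] at hzz
  rw [hwEA] at hww
  rw [← mul_div_assoc, show Q * (Q⁻¹ - 1) = 1 - Q by field_simp,
    div_add_div _ _ hzz hww, div_eq_div_iff (mul_ne_zero hzz hww) hdenC]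
  field_simp
  ring
end

section
/- One-point Nevanlinna–Pick: given ζ₁, w₁ in the open unit disk, an analytic function f : 𝔻 → 𝔻 satisfies f(ζ₁) = w₁ if and only if f(ζ) = (b_{ζ₁}(ζ)·f₁(ζ) + w₁)/(1 + conj(w₁)·b_{ζ₁}(ζ)·f₁(ζ)) for some analytic f₁ : 𝔻 → closure(𝔻). -/
noncomputable def blaschke (a : ℂ) (ζ : ℂ) : ℂ :=
  if a = 0 then ζ else (((‖a‖ : ℝ) : ℂ) / a) * (a - ζ) / (1 - (starRingEnd ℂ) a * ζ)

/-!
Composing `f` with the disk automorphism `mobius w₁` gives a holomorphic self-map `g` of the disk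
with `g ζ₁ = 0`. Precomposing `g` with the automorphism `mobius (-ζ₁)`, which sends `0` to `ζ₁`,
the Schwarz lemma bounds `g(ζ) / mobius ζ₁ ζ` by `1`; since `b_{ζ₁}` is a unimodular multiple of
`mobius ζ₁`, this gives `g = b_{ζ₁} f₁` with `‖f₁‖ ≤ 1`, and `f = mobius (-w₁) ∘ g` is the stated
formula. Conversely, `b_{ζ₁}` vanishes at `ζ₁`.
-/

open Complex ComplexConjugate Metric Set

noncomputable def mobius (w z : ℂ) : ℂ := (z - w) / (1 - conj w * z)

lemma one_sub_conj_mul_ne_zero {w z : ℂ} (hw : ‖w‖ < 1) (hz : ‖z‖ ≤ 1) :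
    1 - conj w * z ≠ 0 := by
  have : ‖conj w * z‖ < 1 := by
    rw [norm_mul, norm_conj]
    nlinarith [norm_nonneg w, norm_nonneg z]
  rw [sub_ne_zero]
  intro h
  simp [← h] at this

lemma mobius_self (w : ℂ) : mobius w w = 0 := by simp [mobius]

lemma mobius_neg_apply (w z : ℂ) : mobius (-w) z = (z + w) / (1 + conj w * z) := by
  simp [mobius, sub_eq_add_neg]

lemma normSq_one_sub_conj_mul_sub_normSq_sub (w z : ℂ) :
    normSq (1 - conj w * z) - normSq (z - w) = (1 - normSq w) * (1 - normSq z) := by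
  simp only [normSq_apply, sub_re, sub_im, mul_re, mul_im, one_re, one_im, conj_re, conj_im]
  ring

lemma norm_mobius_lt_one {w z : ℂ} (hw : ‖w‖ < 1) (hz : ‖z‖ < 1) : ‖mobius w z‖ < 1 := by
  have hden := one_sub_conj_mul_ne_zero hw hz.le
  rw [mobius, norm_div, div_lt_one (norm_pos_iff.mpr hden),
    ← sq_lt_sq₀ (norm_nonneg _) (norm_nonneg _), Complex.sq_norm, Complex.sq_norm, ← sub_pos,
    normSq_one_sub_conj_mul_sub_normSq_sub]
  have : normSq w < 1 := by rw [← Complex.sq_norm]; nlinarith [norm_nonneg w]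
  have : normSq z < 1 := by rw [← Complex.sq_norm]; nlinarith [norm_nonneg z]
  exact mul_pos (by linarith) (by linarith)

lemma mapsTo_mobius {w : ℂ} (hw : ‖w‖ < 1) : MapsTo (mobius w) (ball 0 1) (ball 0 1) :=
  fun _ hz => mem_ball_zero_iff.mpr (norm_mobius_lt_one hw (mem_ball_zero_iff.mp hz))

lemma differentiableOn_mobius {w : ℂ} (hw : ‖w‖ < 1) :
    DifferentiableOn ℂ (mobius w) (ball 0 1) :=
  (differentiableOn_id.sub_const w).div ((differentiableOn_const 1).sub
    (differentiableOn_id.const_mul _)) fun _ hz =>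
    one_sub_conj_mul_ne_zero hw (mem_ball_zero_iff.mp hz).le

lemma mobius_neg_mobius {w z : ℂ} (hw : ‖w‖ < 1) (hz : ‖z‖ ≤ 1) :
    mobius (-w) (mobius w z) = z := by
  have hden : 1 - z * conj w ≠ 0 := mul_comm z (conj w) ▸ one_sub_conj_mul_ne_zero hw hz
  have hw' : 1 - w * conj w ≠ 0 := mul_comm w (conj w) ▸ one_sub_conj_mul_ne_zero hw hw.le
  rw [mobius_neg_apply, mobius]
  field_simp
  rw [show z - w + w * (1 - z * conj w) = z * (1 - w * conj w) by ring,
    show 1 - z * conj w + (z - w) * conj w = 1 - w * conj w by ring, mul_div_cancel_right₀ _ hw']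

lemma exists_unit_blaschke_eq_mul_mobius (a : ℂ) :
    ∃ u : ℂ, ‖u‖ = 1 ∧ ∀ ζ, blaschke a ζ = u * mobius a ζ := by
  rcases eq_or_ne a 0 with rfl | ha
  · exact ⟨1, by simp, fun ζ => by simp [blaschke, mobius]⟩
  · refine ⟨-(‖a‖ / a), by simp [norm_ne_zero_iff.mpr ha], fun ζ => ?_⟩
    rw [blaschke, if_neg ha, mobius]
    ring

lemma blaschke_self (a : ℂ) : blaschke a a = 0 := by
  obtain ⟨u, -, hu⟩ := exists_unit_blaschke_eq_mul_mobius a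
  rw [hu, mobius_self, mul_zero]

theorem exists_eq_blaschke_mul_of_mapsTo {g : ℂ → ℂ} {a : ℂ} (ha : ‖a‖ < 1)
    (hg : DifferentiableOn ℂ g (ball 0 1)) (hmaps : MapsTo g (ball 0 1) (closedBall 0 1))
    (hga : g a = 0) :
    ∃ g₁ : ℂ → ℂ, DifferentiableOn ℂ g₁ (ball 0 1) ∧ (∀ ζ ∈ ball (0 : ℂ) 1, ‖g₁ ζ‖ ≤ 1) ∧
      ∀ ζ ∈ ball (0 : ℂ) 1, g ζ = blaschke a ζ * g₁ ζ := by
  obtain ⟨u, hu, hbu⟩ := exists_unit_blaschke_eq_mul_mobius a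
  have ha' : ‖-a‖ < 1 := by rwa [norm_neg]
  set h := g ∘ mobius (-a) with h_def
  have hh0 : h 0 = 0 := by simp [h, mobius_neg_apply, hga]
  have hh : DifferentiableOn ℂ h (ball 0 1) :=
    hg.comp (differentiableOn_mobius ha') (mapsTo_mobius ha')
  have schwarz : ∀ z ∈ ball (0 : ℂ) 1, ‖dslope h 0 z‖ ≤ 1 := fun z hz => by
    simpa using Complex.norm_dslope_le_div_of_mapsTo_ball hh
      (by rw [hh0]; exact hmaps.comp (mapsTo_mobius ha')) hz
  refine ⟨fun ζ => u⁻¹ * dslope h 0 (mobius a ζ), ?_, fun ζ hζ => ?_, fun ζ hζ => ?_⟩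
  · exact ((Complex.differentiableOn_dslope (ball_mem_nhds 0 one_pos)).mpr hh).comp
      (differentiableOn_mobius ha) (mapsTo_mobius ha) |>.const_mul _
  · rw [norm_mul, norm_inv, hu, inv_one, one_mul]
    exact schwarz _ (mapsTo_mobius ha hζ)
  · have hu0 : u ≠ 0 := norm_ne_zero_iff.mp (hu ▸ one_ne_zero)
    have hdiv := sub_smul_dslope h 0 (mobius a ζ)
    rw [sub_zero, hh0, sub_zero, smul_eq_mul] at hdiv
    rw [hbu, mul_mul_mul_comm, mul_inv_cancel₀ hu0, one_mul, hdiv, h_def, Function.comp_apply,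
      mobius_neg_mobius ha (mem_ball_zero_iff.mp hζ).le]

theorem one_point_nevanlinna_pick (ζ₁ w₁ : ℂ)
    (hζ₁ : ‖ζ₁‖ < 1) (hw₁ : ‖w₁‖ < 1)
    (f : ℂ → ℂ)
    (hf : DifferentiableOn ℂ f {ζ : ℂ | ‖ζ‖ < 1})
    (hmap : ∀ ζ ∈ {ζ : ℂ | ‖ζ‖ < 1}, ‖f ζ‖ < 1) :
    f ζ₁ = w₁ ↔
      ∃ f₁ : ℂ → ℂ, DifferentiableOn ℂ f₁ {ζ : ℂ | ‖ζ‖ < 1} ∧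
        (∀ ζ ∈ {ζ : ℂ | ‖ζ‖ < 1}, ‖f₁ ζ‖ ≤ 1) ∧
        (∀ ζ ∈ {ζ : ℂ | ‖ζ‖ < 1},
          f ζ = (blaschke ζ₁ ζ * f₁ ζ + w₁) /
            (1 + (starRingEnd ℂ) w₁ * blaschke ζ₁ ζ * f₁ ζ)) := by
  have hD : {ζ : ℂ | ‖ζ‖ < 1} = ball 0 1 := by ext; simp
  rw [hD] at hf hmap ⊢
  constructor
  · intro hfζ₁
    have hmaps : MapsTo f (ball 0 1) (ball 0 1) := fun ζ hζ => mem_ball_zero_iff.mpr (hmap ζ hζ)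
    obtain ⟨f₁, hf₁, hf₁_le, hfac⟩ := exists_eq_blaschke_mul_of_mapsTo hζ₁
      ((differentiableOn_mobius hw₁).comp hf hmaps)
      (((mapsTo_mobius hw₁).comp hmaps).mono_right ball_subset_closedBall)
      (by simp [hfζ₁, mobius_self])
    refine ⟨f₁, hf₁, hf₁_le, fun ζ hζ => ?_⟩
    rw [mul_assoc, ← mobius_neg_apply, ← hfac ζ hζ, Function.comp_apply,
      mobius_neg_mobius hw₁ (hmap ζ hζ).le]
  · rintro ⟨f₁, -, -, hformula⟩
    simpa [blaschke_self] using hformula ζ₁ (mem_ball_zero_iff.mpr hζ₁)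
end
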